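/- The map φ : 𝒯_E → 𝒪_E given by φ(H, S) = U_{H,S} is an order isomorphism from the poset 𝒯_E onto the poset 𝒪_E of open invariant subsets of X ordered by inclusion, with inverse ρ given by ρ(U) = (H_U, S_U); in particular 𝒯_E and 𝒪_E are isomorphic lattices. -/

import Mathlib

namespace GraphLPA

/-- A directed graph: vertices, edges, and source/range maps. -/
structure DirGraph where
  V : Type
  Ed : Type
  src : Ed → V
  rng : Ed → V

/-- A vertex is a sink if it emits no edges. -/
def IsSink (G : DirGraph) (v : G.V) : Prop := ∀ e : G.Ed, G.src e ≠ v

/-- A vertex is an infinite emitter if it emits infinitely many edges. -/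
def IsInfEmitter (G : DirGraph) (v : G.V) : Prop := {e : G.Ed | G.src e = v}.Infinite

/-- A vertex is regular if it is neither a sink nor an infinite emitter. -/
def IsRegular (G : DirGraph) (v : G.V) : Prop := ¬ IsSink G v ∧ ¬ IsInfEmitter G v

/-- A (raw) finite path: a starting vertex together with a list of edges.
A vertex is regarded as the finite path with empty edge list. -/
structure FinPath (G : DirGraph) where
  start : G.V
  edges : List G.Ed

/-- The range of a finite path: the range of its last edge, or its start if it has length 0. -/
def FinPath.range {G : DirGraph} (p : FinPath G) : G.V :=
  match p.edges.getLast? with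
  | none => p.start
  | some e => G.rng e

/-- The validity condition for a finite path: the first edge (if any) starts at `start`,
and consecutive edges are composable. -/
def FinPath.IsPath {G : DirGraph} (p : FinPath G) : Prop :=
  (∀ e ∈ p.edges.head?, G.src e = p.start) ∧
    p.edges.Chain' (fun e f => G.rng e = G.src f)

/-- An infinite sequence of edges is an infinite path if consecutive edges are composable. -/
def InfIsPath (G : DirGraph) (f : ℕ → G.Ed) : Prop :=
  ∀ n, G.rng (f n) = G.src (f (n + 1))

/-- Raw boundary paths: either a finite path or an infinite sequence of edges. -/
inductive BPath (G : DirGraph) where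
  | fin : FinPath G → BPath G
  | inf : (ℕ → G.Ed) → BPath G

/-- The source of a boundary path. -/
def BPath.start {G : DirGraph} : BPath G → G.V
  | .fin p => p.start
  | .inf f => G.src (f 0)

/-- Membership in the boundary path space: a valid finite path whose range
is a sink or infinite emitter, or a valid infinite path. -/
def BPath.IsBoundary {G : DirGraph} : BPath G → Prop
  | .fin p => p.IsPath ∧ (IsSink G p.range ∨ IsInfEmitter G p.range)
  | .inf f => InfIsPath G f

/-- A vertex occurring on a boundary path (the source, or the range of any of its edges). -/
def BPath.vertexOn {G : DirGraph} : BPath G → G.V → Prop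
  | .fin p, v => p.start = v ∨ ∃ e ∈ p.edges, G.rng e = v
  | .inf f, v => G.src (f 0) = v ∨ ∃ n, G.rng (f n) = v

/-- The boundary path space `X` of the graph `G`. -/
def BPS (G : DirGraph) : Type := { x : BPath G // x.IsBoundary }

/-- Concatenation `μx` of a finite path `μ` with a boundary path `x`. -/
def FinPath.catB {G : DirGraph} (μ : FinPath G) : BPath G → BPath G
  | .fin p => .fin ⟨μ.start, μ.edges ++ p.edges⟩
  | .inf f => .inf (fun n => if h : n < μ.edges.length then μ.edges[n] else f (n - μ.edges.length))

/-- The cylinder set `Z(μ) = {μx : x ∈ X, s(x) = r(μ)}`. -/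
def ZSet {G : DirGraph} (μ : FinPath G) : Set (BPS G) :=
  { x | ∃ z : BPS G, z.1.start = μ.range ∧ x.1 = μ.catB z.1 }

/-- The finite path `μe` obtained by appending an edge. -/
def FinPath.extend {G : DirGraph} (μ : FinPath G) (e : G.Ed) : FinPath G :=
  ⟨μ.start, μ.edges ++ [e]⟩

/-- The basic set `Z(μ∖F) = Z(μ) ∖ ⋃_{e ∈ F} Z(μe)`. -/
def ZSetMinus {G : DirGraph} (μ : FinPath G) (F : Finset G.Ed) : Set (BPS G) :=
  ZSet μ \ ⋃ e ∈ F, ZSet (μ.extend e)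

/-- The topology on the boundary path space generated by the sets `Z(μ∖F)`. -/
instance BPS.instTopologicalSpace (G : DirGraph) : TopologicalSpace (BPS G) :=
  TopologicalSpace.generateFrom
    { U | ∃ (μ : FinPath G) (F : Finset G.Ed),
        μ.IsPath ∧ (∀ e ∈ F, G.src e = μ.range) ∧ U = ZSetMinus μ F }

/-- A subset `U ⊆ X` is invariant if whenever `αz ∈ U` with `α, β` finite paths with
`r(α) = r(β)` and `s(z) = r(α)`, then `βz ∈ U`. -/
def IsInvariant {G : DirGraph} (U : Set (BPS G)) : Prop :=
  ∀ α β : FinPath G, α.IsPath → β.IsPath → α.range = β.range →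
    ∀ z : BPS G, z.1.start = α.range →
      ∀ x y : BPS G, x.1 = α.catB z.1 → y.1 = β.catB z.1 → x ∈ U → y ∈ U

/-- A set of vertices is hereditary if it is closed under ranges of edges out of it. -/
def Hereditary (G : DirGraph) (H : Set G.V) : Prop :=
  ∀ e : G.Ed, G.src e ∈ H → G.rng e ∈ H

/-- A set of vertices is saturated if it contains every regular vertex all of whose
emitted edges have range in it. -/
def Saturated (G : DirGraph) (H : Set G.V) : Prop :=
  ∀ v : G.V, IsRegular G v → (∀ e : G.Ed, G.src e = v → G.rng e ∈ H) → v ∈ H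

/-- The set `B_H` of breaking vertices of a hereditary set `H`. -/
def BreakVerts (G : DirGraph) (H : Set G.V) : Set G.V :=
  { v | v ∉ H ∧ IsInfEmitter G v ∧
      { e : G.Ed | G.src e = v ∧ G.rng e ∉ H }.Finite ∧
      { e : G.Ed | G.src e = v ∧ G.rng e ∉ H }.Nonempty }

/-- `U_H`: the boundary paths on which some vertex of `H` occurs. -/
def UH {G : DirGraph} (H : Set G.V) : Set (BPS G) :=
  { x | ∃ v ∈ H, x.1.vertexOn v }

/-- `U_S`: the boundary paths that are finite paths with range in `S`. -/
def US {G : DirGraph} (S : Set G.V) : Set (BPS G) :=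
  { x | ∃ p : FinPath G, x.1 = BPath.fin p ∧ p.range ∈ S }

/-- `U_{H,S} = U_H ∪ U_S`. -/
def UHS {G : DirGraph} (H S : Set G.V) : Set (BPS G) := UH H ∪ US S

/-- `H_U = {v : Z(v) ⊆ U}`. -/
def HOf {G : DirGraph} (U : Set (BPS G)) : Set G.V :=
  { v | ZSet (⟨v, []⟩ : FinPath G) ⊆ U }

/-- `S_U`: ranges of finite paths in `U` whose range is an infinite emitter not in `H_U`. -/
def SOf {G : DirGraph} (U : Set (BPS G)) : Set G.V :=
  { w | ∃ x ∈ U, ∃ p : FinPath G, x.1 = BPath.fin p ∧ p.range = w ∧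
      IsInfEmitter G w ∧ w ∉ HOf U }

/-- `Path(v, H)`: the finite paths of positive length with source `v` and range in `H`. -/
def PathTo {G : DirGraph} (v : G.V) (H : Set G.V) : Set (FinPath G) :=
  { p | p.IsPath ∧ p.start = v ∧ p.edges ≠ [] ∧ p.range ∈ H }

/-- Condition (a): every infinite path all of whose vertices lie outside `H`
eventually does not connect to `H`. -/
def CondA (G : DirGraph) (H : Set G.V) : Prop :=
  ∀ f : ℕ → G.Ed, InfIsPath G f →
    (G.src (f 0) ∉ H ∧ ∀ n, G.rng (f n) ∉ H) →
    ∃ N : ℕ, PathTo (G.rng (f N)) H = ∅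

/-- Condition (b) with target set `S`: every vertex emitting infinitely many edges
that connect to `H` belongs to `H ∪ S`. -/
def CondB (G : DirGraph) (H S : Set G.V) : Prop :=
  ∀ v : G.V,
    { e : G.Ed | G.src e = v ∧ (PathTo (G.rng e) H).Nonempty }.Infinite → v ∈ H ∪ S

/-- An `H`-compatible path: a finite path of positive length with range in `H`
whose last edge has source outside `H ∪ B_H`. -/
def HCompatible {G : DirGraph} (H : Set G.V) (p : FinPath G) : Prop :=
  p.IsPath ∧ p.edges ≠ [] ∧ p.range ∈ H ∧
    ∀ e ∈ p.edges.getLast?, G.src e ∉ H ∪ BreakVerts G H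

/-- `C_{v,H}`: the set of `H`-compatible paths with source `v`. -/
def CSet {G : DirGraph} (v : G.V) (H : Set G.V) : Set (FinPath G) :=
  { p | p.start = v ∧ HCompatible H p }

-- ################ auxiliary lemmas ################

variable {G : DirGraph}

lemma head?_eq_getElem_zero {α : Type*} {l : List α} (h : 0 < l.length) :
    l.head? = some (l[0]) := by
  cases l with
  | nil => simp at h
  | cons a t => rfl

lemma chain_step {l : List G.Ed}
    (h : l.Chain' (fun e f => G.rng e = G.src f)) {i : ℕ} (hi : i + 1 < l.length) :
    G.rng l[i] = G.src l[i+1] := by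
  have := List.isChain_iff_getElem.mp h i (by omega)
  simpa using this

lemma src_getElem_zero {p : FinPath G} (hp : p.IsPath) (h : 0 < p.edges.length) :
    G.src (p.edges[0]) = p.start :=
  hp.1 _ (by simp [head?_eq_getElem_zero h])

@[simp] lemma range_nil (v : G.V) : FinPath.range (⟨v, []⟩ : FinPath G) = v := rfl

lemma range_eq_getElem {p : FinPath G} (h : p.edges ≠ []) :
    p.range = G.rng (p.edges[p.edges.length - 1]'(by
      have := List.length_pos_iff.mpr h; omega)) := by
  unfold FinPath.range
  rw [List.getLast?_eq_getElem?]
  rw [List.getElem?_eq_getElem (by have := List.length_pos_iff.mpr h; omega)]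

lemma range_concat (v : G.V) (l : List G.Ed) (e : G.Ed) :
    FinPath.range (⟨v, l ++ [e]⟩ : FinPath G) = G.rng e := by
  unfold FinPath.range
  simp [List.getLast?_concat]

lemma range_append_right (v w : G.V) (l₁ l₂ : List G.Ed) (h : l₂ ≠ []) :
    FinPath.range (⟨v, l₁ ++ l₂⟩ : FinPath G) = FinPath.range (⟨w, l₂⟩ : FinPath G) := by
  unfold FinPath.range
  rw [List.getLast?_append]
  cases hl : l₂.getLast? with
  | none => exact absurd (List.getLast?_eq_none_iff.mp hl) h
  | some e => simp

lemma range_append_nil (v : G.V) (l₁ : List G.Ed) :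
    FinPath.range (⟨v, l₁ ++ ([] : List G.Ed)⟩ : FinPath G) =
      FinPath.range (⟨v, l₁⟩ : FinPath G) := by
  simp

@[simp] lemma range_extend (μ : FinPath G) (e : G.Ed) :
    (μ.extend e).range = G.rng e := range_concat _ _ _

lemma range_of_nil_edges {p : FinPath G} (h : p.edges = []) : p.range = p.start := by
  unfold FinPath.range; rw [h]; rfl

lemma triv_isPath (v : G.V) : (⟨v, []⟩ : FinPath G).IsPath := by
  constructor
  · intro e he; simp at he
  · exact List.isChain_nil

lemma extend_isPath {μ : FinPath G} (hμ : μ.IsPath) {e : G.Ed} (he : G.src e = μ.range) :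
    (μ.extend e).IsPath := by
  constructor
  · intro d hd
    rw [FinPath.extend] at hd ⊢
    simp only [List.head?_append] at hd
    cases hl : μ.edges with
    | nil =>
      rw [hl] at hd; simp at hd
      subst hd
      show G.src e = μ.start
      rw [he, range_of_nil_edges hl]
    | cons a t =>
      rw [hl] at hd; simp at hd
      subst hd
      exact hμ.1 _ (by rw [hl]; rfl)
  · rw [FinPath.extend]
    rw [List.Chain', List.isChain_append]
    refine ⟨hμ.2, by simp, ?_⟩
    intro a ha b hb
    simp at hb; subst hb
    -- a = last of μ.edges, rng a = μ.range = src e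
    rw [he]
    -- rng a = μ.range
    have hne : μ.edges ≠ [] := by
      intro h; rw [h] at ha; simp at ha
    rw [range_eq_getElem hne]
    rw [List.getLast?_eq_getElem?] at ha
    rw [List.getElem?_eq_getElem (by have := List.length_pos_iff.mpr hne; omega)] at ha
    simp at ha; subst ha; rfl


lemma triv_catB (v : G.V) (y : BPath G) (h : y.start = v) :
    FinPath.catB ⟨v, []⟩ y = y := by
  cases y with
  | fin p =>
    have h' : p.start = v := h
    subst h'
    show BPath.fin ⟨p.start, [] ++ p.edges⟩ = BPath.fin p
    simp
  | inf f =>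
    show BPath.inf (fun n => if h : n < ([] : List G.Ed).length then ([] : List G.Ed)[n]
        else f (n - ([] : List G.Ed).length)) = BPath.inf f
    have heq : (fun n => if h : n < ([] : List G.Ed).length then ([] : List G.Ed)[n]
        else f (n - ([] : List G.Ed).length)) = f := by
      funext n
      rw [dif_neg (by simp)]
      simp
    rw [heq]

lemma catB_start {μ : FinPath G} {y : BPath G} (hμ : μ.IsPath) (hs : y.start = μ.range) :
    (μ.catB y).start = μ.start := by
  cases y with
  | fin p => rfl
  | inf f =>
    show G.src (if h : 0 < μ.edges.length then μ.edges[0] else f (0 - μ.edges.length)) = μ.start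
    by_cases h : 0 < μ.edges.length
    · rw [dif_pos h]; exact src_getElem_zero hμ h
    · rw [dif_neg h]
      have hnil : μ.edges = [] := List.length_eq_zero_iff.mp (by omega)
      show G.src (f (0 - μ.edges.length)) = μ.start
      simp only [Nat.zero_sub]
      exact hs.trans (range_of_nil_edges hnil)

lemma range_catB_fin {μ p : FinPath G} (hs : p.start = μ.range) :
    FinPath.range (⟨μ.start, μ.edges ++ p.edges⟩ : FinPath G) = p.range := by
  by_cases hp : p.edges = []
  · rw [hp, List.append_nil, range_of_nil_edges hp, hs]
  · rw [range_append_right μ.start p.start _ _ hp]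

lemma catB_isPath_fin {μ p : FinPath G} (hμ : μ.IsPath) (hp : p.IsPath)
    (hs : p.start = μ.range) :
    FinPath.IsPath (⟨μ.start, μ.edges ++ p.edges⟩ : FinPath G) := by
  constructor
  · intro e he
    simp only [List.head?_append] at he
    cases hl : μ.edges with
    | nil =>
      rw [hl] at he; simp at he
      have := hp.1 e (by simpa using he)
      show G.src e = μ.start
      rw [this, hs, range_of_nil_edges hl]
    | cons a t =>
      rw [hl] at he; simp at he
      subst he
      exact hμ.1 _ (by rw [hl]; rfl)
  · rw [List.Chain', List.isChain_append]
    refine ⟨hμ.2, hp.2, ?_⟩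
    intro a ha b hb
    have hne : μ.edges ≠ [] := by intro hc; rw [hc] at ha; simp at ha
    rw [List.getLast?_eq_getElem?, List.getElem?_eq_getElem
      (by have := List.length_pos_iff.mpr hne; omega)] at ha
    simp at ha; subst ha
    have hb' := hp.1 b hb
    rw [hb', hs, range_eq_getElem hne]

lemma catB_isBoundary {μ : FinPath G} {y : BPath G} (hμ : μ.IsPath)
    (hy : y.IsBoundary) (hs : y.start = μ.range) : (μ.catB y).IsBoundary := by
  cases y with
  | fin p =>
    refine ⟨catB_isPath_fin hμ hy.1 hs, ?_⟩
    rw [show FinPath.range (⟨μ.start, μ.edges ++ p.edges⟩ : FinPath G) = p.range from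
      range_catB_fin hs]
    exact hy.2
  | inf f =>
    intro n
    show G.rng (if h : n < μ.edges.length then _ else _)
      = G.src (if h : n + 1 < μ.edges.length then _ else _)
    by_cases h1 : n + 1 < μ.edges.length
    · rw [dif_pos h1, dif_pos (by omega)]
      exact chain_step hμ.2 h1
    · by_cases h2 : n < μ.edges.length
      · rw [dif_pos h2, dif_neg h1]
        have hne : μ.edges ≠ [] := by
          intro hc; rw [hc] at h2; simp at h2
        have h4 : n + 1 - μ.edges.length = 0 := by omega
        rw [h4]
        have h3 : n = μ.edges.length - 1 := by omega
        subst h3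
        rw [← range_eq_getElem hne, ← hs]
        rfl
      · rw [dif_neg h2, dif_neg h1]
        have h5 : n + 1 - μ.edges.length = (n - μ.edges.length) + 1 := by omega
        rw [h5]
        exact hy _

lemma catB_assoc (a b : G.V) (l₁ l₂ : List G.Ed) (y : BPath G) :
    FinPath.catB ⟨a, l₁ ++ l₂⟩ y
      = FinPath.catB ⟨a, l₁⟩ (FinPath.catB ⟨b, l₂⟩ y) := by
  cases y with
  | fin p => show BPath.fin _ = BPath.fin _; simp
  | inf f =>
    show BPath.inf _ = BPath.inf _
    congr 1
    funext n
    simp only [List.length_append]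
    by_cases h1 : n < l₁.length
    · rw [dif_pos (by omega), dif_pos h1, List.getElem_append_left h1]
    · rw [dif_neg h1]
      by_cases h2 : n < l₁.length + l₂.length
      · rw [dif_pos h2, dif_pos (by omega : n - l₁.length < l₂.length),
          List.getElem_append_right (by omega)]
      · rw [dif_neg h2, dif_neg (by omega : ¬ n - l₁.length < l₂.length)]
        congr 1
        omega

def edgeAt : BPath G → ℕ → Option G.Ed
  | .fin p, n => p.edges[n]?
  | .inf f, n => some (f n)

lemma edgeAt_catB (μ : FinPath G) (y : BPath G) (n : ℕ) :
    edgeAt (μ.catB y) n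
      = if h : n < μ.edges.length then some (μ.edges[n])
        else edgeAt y (n - μ.edges.length) := by
  cases y with
  | fin p =>
    show (μ.edges ++ p.edges)[n]? = _
    rw [List.getElem?_append]
    by_cases h : n < μ.edges.length
    · rw [if_pos h, dif_pos h, List.getElem?_eq_getElem h]
    · rw [if_neg h, dif_neg h]; rfl
  | inf f =>
    show some (if h : n < μ.edges.length then _ else _) = _
    by_cases h : n < μ.edges.length
    · rw [dif_pos h, dif_pos h]
    · rw [dif_neg h, dif_neg h]; rfl

lemma edgeAt_of_mem_ZSet {μ : FinPath G} {x : BPS G} (hx : x ∈ ZSet μ)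
    {i : ℕ} (hi : i < μ.edges.length) : edgeAt x.1 i = some (μ.edges[i]) := by
  obtain ⟨z, hz, hxz⟩ := hx
  rw [hxz, edgeAt_catB, dif_pos hi]

lemma edgeAt_of_mem_ZSet_extend {μ : FinPath G} {e : G.Ed} {x : BPS G}
    (hx : x ∈ ZSet (μ.extend e)) : edgeAt x.1 μ.edges.length = some e := by
  have h : μ.edges.length < (μ.extend e).edges.length := by
    show _ < (μ.edges ++ [e]).length; simp
  rw [edgeAt_of_mem_ZSet hx h]
  congr 1
  show (μ.edges ++ [e])[μ.edges.length] = e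
  exact List.getElem_concat_length rfl _

lemma mem_ZSet_triv {v : G.V} {x : BPS G} : x ∈ ZSet (⟨v, []⟩ : FinPath G) ↔ x.1.start = v := by
  constructor
  · rintro ⟨z, hz, hxz⟩
    rw [hxz]
    exact catB_start (triv_isPath v) hz
  · intro h
    exact ⟨x, h, (triv_catB v x.1 h).symm⟩

lemma self_start_vertexOn (y : BPath G) : y.vertexOn y.start := by
  cases y with
  | fin p => exact Or.inl rfl
  | inf f => exact Or.inl rfl

lemma range_vertexOn_fin (p : FinPath G) : (BPath.fin p).vertexOn p.range := by
  cases hp : p.edges with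
  | nil => exact Or.inl (range_of_nil_edges hp).symm
  | cons a t =>
    refine Or.inr ⟨p.edges[p.edges.length - 1]'(by rw [hp]; simp), List.getElem_mem _, ?_⟩
    rw [range_eq_getElem (by rw [hp]; simp)]

lemma vertexOn_catB_right {μ : FinPath G} {y : BPath G} (hμ : μ.IsPath)
    (hs : y.start = μ.range) {v : G.V} (h : y.vertexOn v) : (μ.catB y).vertexOn v := by
  cases y with
  | fin p =>
    have hs' : p.start = μ.range := hs
    show (⟨μ.start, μ.edges ++ p.edges⟩ : FinPath G).start = v ∨ _
    rcases h with h | ⟨e, he, hev⟩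
    · by_cases hl : μ.edges = []
      · left
        show μ.start = v
        rw [← h, hs', range_of_nil_edges hl]
      · right
        have hlen : 0 < μ.edges.length := List.length_pos_iff.mpr hl
        refine ⟨μ.edges[μ.edges.length - 1]'(by omega), ?_, ?_⟩
        · exact List.mem_append_left _ (List.getElem_mem _)
        · rw [← range_eq_getElem hl, ← hs']
          exact h
    · exact Or.inr ⟨e, List.mem_append_right _ he, hev⟩
  | inf f =>
    have hs' : G.src (f 0) = μ.range := hs
    rcases h with h | ⟨n, hn⟩
    · by_cases hl : μ.edges = []
      · refine Or.inl ?_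
        show G.src (if hh : 0 < μ.edges.length then μ.edges[0] else f (0 - μ.edges.length)) = v
        rw [dif_neg (by simp [hl])]
        simpa using h
      · refine Or.inr ⟨μ.edges.length - 1, ?_⟩
        have hlen : 0 < μ.edges.length := List.length_pos_iff.mpr hl
        show G.rng (if hh : μ.edges.length - 1 < μ.edges.length
          then μ.edges[μ.edges.length - 1] else f (μ.edges.length - 1 - μ.edges.length)) = v
        rw [dif_pos (by omega), ← range_eq_getElem hl, ← hs']
        exact h
    · refine Or.inr ⟨μ.edges.length + n, ?_⟩
      show G.rng (if hh : μ.edges.length + n < μ.edges.length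
        then μ.edges[μ.edges.length + n] else f (μ.edges.length + n - μ.edges.length)) = v
      rw [dif_neg (by omega)]
      have harith : μ.edges.length + n - μ.edges.length = n := by omega
      rw [harith]
      exact hn

lemma vertexOn_catB_cases {μ : FinPath G} {y : BPath G} (hμ : μ.IsPath) {v : G.V}
    (h : (μ.catB y).vertexOn v) : (BPath.fin μ).vertexOn v ∨ y.vertexOn v := by
  cases y with
  | fin p =>
    rcases h with h | ⟨e, he, hev⟩
    · exact Or.inl (Or.inl h)
    · rcases List.mem_append.mp he with h' | h'
      · exact Or.inl (Or.inr ⟨e, h', hev⟩)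
      · exact Or.inr (Or.inr ⟨e, h', hev⟩)
  | inf f =>
    rcases h with h | ⟨n, hn⟩
    · have h' : G.src (if hh : 0 < μ.edges.length then μ.edges[0]
        else f (0 - μ.edges.length)) = v := h
      by_cases hl : 0 < μ.edges.length
      · rw [dif_pos hl] at h'
        exact Or.inl (Or.inl (by rw [← src_getElem_zero hμ hl]; exact h'))
      · rw [dif_neg hl] at h'
        simp only [Nat.zero_sub] at h'
        exact Or.inr (Or.inl h')
    · have hn' : G.rng (if hh : n < μ.edges.length then μ.edges[n]
        else f (n - μ.edges.length)) = v := hn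
      by_cases hl : n < μ.edges.length
      · rw [dif_pos hl] at hn'
        exact Or.inl (Or.inr ⟨_, List.getElem_mem _, hn'⟩)
      · rw [dif_neg hl] at hn'
        exact Or.inr (Or.inr ⟨_, hn'⟩)


lemma prefix_isPath {a : G.V} {l₁ l₂ : List G.Ed}
    (hp : FinPath.IsPath (⟨a, l₁ ++ l₂⟩ : FinPath G)) :
    FinPath.IsPath (⟨a, l₁⟩ : FinPath G) := by
  constructor
  · intro d hd
    apply hp.1
    rw [Option.mem_def] at hd
    rw [List.head?_append, hd]
    rfl
  · exact hp.2.prefix ⟨l₂, rfl⟩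

lemma src_of_concat_isPath {a : G.V} {l : List G.Ed} {e : G.Ed}
    (hp : FinPath.IsPath (⟨a, l ++ [e]⟩ : FinPath G)) :
    G.src e = FinPath.range (⟨a, l⟩ : FinPath G) := by
  by_cases hl : l = []
  · subst hl
    have := hp.1 e (by rfl)
    simpa using this
  · have hc := (List.isChain_append.mp hp.2).2.2
    have hlast : l.getLast? = some (l.getLast hl) := List.getLast?_eq_getLast hl
    have hre := hc _ (by rw [hlast]; rfl) e rfl
    rw [← hre]
    unfold FinPath.range
    rw [hlast]

lemma suffix_isPath {a : G.V} {l₁ l₂ : List G.Ed}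
    (hp : FinPath.IsPath (⟨a, l₁ ++ l₂⟩ : FinPath G)) :
    FinPath.IsPath (⟨FinPath.range (⟨a, l₁⟩ : FinPath G), l₂⟩ : FinPath G) := by
  constructor
  · intro d hd
    by_cases hl : l₁ = []
    · subst hl
      have := hp.1 d (by simpa using hd)
      simpa using this
    · have hc := (List.isChain_append.mp hp.2).2.2
      have hlast : l₁.getLast? = some (l₁.getLast hl) := List.getLast?_eq_getLast hl
      have hrd := hc _ (by rw [hlast]; rfl) d hd
      rw [← hrd]
      show G.rng _ = FinPath.range (⟨a, l₁⟩ : FinPath G)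
      unfold FinPath.range
      rw [hlast]
  · exact hp.2.suffix ⟨l₁, rfl⟩

lemma range_take {a : G.V} {l : List G.Ed} {i : ℕ} (hi : i < l.length) :
    FinPath.range (⟨a, l.take (i+1)⟩ : FinPath G) = G.rng (l[i]) := by
  rw [List.take_succ, List.getElem?_eq_getElem hi]
  show FinPath.range (⟨a, l.take i ++ [l[i]]⟩ : FinPath G) = _
  rw [range_concat]

lemma range_drop {a b : G.V} {l : List G.Ed} {k : ℕ} (h : l.drop k ≠ []) :
    FinPath.range (⟨a, l.drop k⟩ : FinPath G) = FinPath.range (⟨b, l⟩ : FinPath G) := by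
  obtain ⟨x, hx⟩ : ∃ x, (l.drop k).getLast? = some x := by
    cases hl : (l.drop k).getLast? with
    | none => exact absurd (List.getLast?_eq_none_iff.mp hl) h
    | some x => exact ⟨x, rfl⟩
  have hlx : l.getLast? = some x := by
    conv_lhs => rw [← List.take_append_drop k l]
    rw [List.getLast?_append, hx]
    rfl
  unfold FinPath.range
  simp only [hx, hlx]

lemma hered_range_aux {H : Set G.V} (hH : Hereditary G H) :
    ∀ (l : List G.Ed) (a : G.V), FinPath.IsPath (⟨a, l⟩ : FinPath G) →
      (a ∈ H ∨ ∃ e ∈ l, G.rng e ∈ H) → FinPath.range (⟨a, l⟩ : FinPath G) ∈ H := by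
  intro l
  induction l using List.reverseRecOn with
  | nil =>
    intro a _ h
    rcases h with h | ⟨e, he, _⟩
    · simpa using h
    · simp at he
  | append_singleton l e ih =>
    intro a hp h
    rw [range_concat]
    have hp' : FinPath.IsPath (⟨a, l⟩ : FinPath G) := prefix_isPath hp
    have hsrc : G.src e = FinPath.range (⟨a, l⟩ : FinPath G) := src_of_concat_isPath hp
    rcases h with h | ⟨d, hd, hdH⟩
    · exact hH e (by rw [hsrc]; exact ih a hp' (Or.inl h))
    · rcases List.mem_append.mp hd with hd' | hd'
      · exact hH e (by rw [hsrc]; exact ih a hp' (Or.inr ⟨d, hd', hdH⟩))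
      · simp at hd'; subst hd'; exact hdH

lemma hered_range {H : Set G.V} (hH : Hereditary G H) {p : FinPath G} (hp : p.IsPath)
    {v : G.V} (hv : v ∈ H) (hon : (BPath.fin p).vertexOn v) : p.range ∈ H := by
  have : FinPath.range (⟨p.start, p.edges⟩ : FinPath G) ∈ H := by
    apply hered_range_aux hH p.edges p.start hp
    rcases hon with h | ⟨e, he, hev⟩
    · exact Or.inl (h ▸ hv)
    · exact Or.inr ⟨e, he, hev ▸ hv⟩
  exact this

lemma vertexOn_split {x : BPS G} {v : G.V} (h : x.1.vertexOn v) :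
    ∃ (μ : FinPath G) (z : BPS G), μ.IsPath ∧ μ.range = v ∧ z.1.start = v ∧
      x.1 = μ.catB z.1 := by
  obtain ⟨x1, hx⟩ := x
  cases x1 with
  | fin p =>
    rcases h with h | ⟨e, he, hev⟩
    · exact ⟨⟨v, []⟩, ⟨BPath.fin p, hx⟩, triv_isPath v, range_nil v, h,
        (triv_catB v (BPath.fin p) h).symm⟩
    · obtain ⟨i, hi, hie⟩ := List.getElem_of_mem he
      set l := p.edges with hl
      have hrngi : G.rng (l[i]'hi) = v := by rw [hie]; exact hev
      have hpl : FinPath.IsPath (⟨p.start, l.take (i+1) ++ l.drop (i+1)⟩ : FinPath G) := by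
        rw [List.take_append_drop]
        exact hx.1
      have hμpath : FinPath.IsPath (⟨p.start, l.take (i+1)⟩ : FinPath G) :=
        prefix_isPath hpl
      have hμrange : FinPath.range (⟨p.start, l.take (i+1)⟩ : FinPath G) = v := by
        rw [range_take hi]; exact hrngi
      have hqpath : FinPath.IsPath (⟨v, l.drop (i+1)⟩ : FinPath G) := by
        have := suffix_isPath hpl
        rwa [hμrange] at this
      have hqrange : FinPath.range (⟨v, l.drop (i+1)⟩ : FinPath G) = p.range := by
        by_cases hd : l.drop (i+1) = []
        · rw [hd, range_nil]
          have hlen : l.length = i + 1 := by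
            have := List.drop_eq_nil_iff.mp hd
            omega
          have : l.take (i+1) = l := List.take_of_length_le (by omega)
          rw [this] at hμrange
          rw [← hμrange]
        · exact range_drop hd
      refine ⟨⟨p.start, l.take (i+1)⟩, ⟨BPath.fin ⟨v, l.drop (i+1)⟩, ?_⟩,
        hμpath, hμrange, rfl, ?_⟩
      · exact ⟨hqpath, by rw [hqrange]; exact hx.2⟩
      · show BPath.fin p = BPath.fin ⟨p.start, l.take (i+1) ++ l.drop (i+1)⟩
        rw [List.take_append_drop]
  | inf f =>
    rcases h with h | ⟨n, hn⟩
    · exact ⟨⟨v, []⟩, ⟨BPath.inf f, hx⟩, triv_isPath v, range_nil v, h,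
        (triv_catB v (BPath.inf f) h).symm⟩
    · refine ⟨⟨G.src (f 0), List.ofFn (fun i : Fin (n+1) => f i)⟩,
        ⟨BPath.inf (fun m => f (m + (n+1))), ?_⟩, ⟨?_, ?_⟩, ?_, ?_, ?_⟩
      · intro m
        show G.rng (f (m + (n+1))) = G.src (f (m + 1 + (n+1)))
        have harith : m + 1 + (n + 1) = m + (n+1) + 1 := by omega
        rw [harith]
        exact hx _
      · intro d hd
        have hlen : 0 < (List.ofFn (fun i : Fin (n+1) => f i)).length := by simp
        rw [Option.mem_def, head?_eq_getElem_zero hlen] at hd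
        simp only [List.getElem_ofFn] at hd
        injection hd with hd
        subst hd
        rfl
      · apply List.isChain_iff_getElem.mpr
        intro i hi
        simp only [List.length_ofFn] at hi
        simp only [List.get_eq_getElem, List.getElem_ofFn]
        exact hx i
      · -- range = v
        rw [List.ofFn_succ', List.concat_eq_append, range_concat]
        simpa using hn
      · show G.src (f (0 + (n+1))) = v
        have : (0 : ℕ) + (n+1) = n + 1 := by omega
        rw [this, ← hx n]
        exact hn
      · show BPath.inf f = BPath.inf _
        congr 1
        funext m
        by_cases hm : m < (List.ofFn (fun i : Fin (n+1) => f i)).length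
        · rw [dif_pos hm]
          simp only [List.getElem_ofFn]
        · rw [dif_neg hm]
          simp only [List.length_ofFn] at hm ⊢
          congr 1
          omega


lemma range_singleton (a : G.V) (e : G.Ed) :
    FinPath.range (⟨a, [e]⟩ : FinPath G) = G.rng e := by
  have := range_concat a ([] : List G.Ed) e
  simpa using this

lemma catB_nil (p : FinPath G) (w : G.V) :
    p.catB (BPath.fin ⟨w, []⟩) = BPath.fin p := by
  show BPath.fin ⟨p.start, p.edges ++ []⟩ = BPath.fin p
  simp

lemma isOpen_basic {μ : FinPath G} {F : Finset G.Ed} (hμ : μ.IsPath)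
    (hF : ∀ e ∈ F, G.src e = μ.range) : IsOpen (ZSetMinus μ F) :=
  TopologicalSpace.isOpen_generateFrom_of_mem ⟨μ, F, hμ, hF, rfl⟩

lemma isOpen_ZSet {μ : FinPath G} (hμ : μ.IsPath) : IsOpen (ZSet μ) := by
  have : ZSet μ = ZSetMinus μ ∅ := by
    unfold ZSetMinus; simp
  rw [this]
  exact isOpen_basic hμ (by simp)

lemma edgeAt_fin_nil {q : FinPath G} (h : edgeAt (BPath.fin q) 0 = none) :
    q.edges = [] := by
  have : q.edges[0]? = none := h
  cases hq : q.edges with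
  | nil => rfl
  | cons a t => rw [hq] at this; simp at this

/-- Key decomposition step: if `y = p ⬝ z` and `z` has a first edge `e0`, then
`y ∈ Z(p e0)`, `src e0 = range p`, and `rng e0` lies on `y`. -/
lemma decomp_step {p : FinPath G} (hp : p.IsPath) {zy : BPS G} (hzs : zy.1.start = p.range)
    {e0 : G.Ed} (he0 : edgeAt zy.1 0 = some e0) {y : BPS G} (hy : y.1 = p.catB zy.1) :
    y ∈ ZSet (p.extend e0) ∧ G.src e0 = p.range ∧ y.1.vertexOn (G.rng e0) := by
  obtain ⟨z1, hbd⟩ := zy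
  cases z1 with
  | fin q =>
    have hq0 : q.edges[0]? = some e0 := he0
    obtain ⟨t, ht⟩ : ∃ t, q.edges = e0 :: t := by
      cases hqe : q.edges with
      | nil => rw [hqe] at hq0; simp at hq0
      | cons a s =>
        rw [hqe] at hq0
        simp at hq0
        subst hq0
        exact ⟨s, rfl⟩
    have hqpath : q.IsPath := hbd.1
    have hqpath' : FinPath.IsPath (⟨q.start, [e0] ++ t⟩ : FinPath G) := by
      simp only [List.singleton_append]
      rw [← ht]
      exact hqpath
    have htpath : FinPath.IsPath (⟨G.rng e0, t⟩ : FinPath G) := by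
      have := suffix_isPath hqpath'
      rwa [range_singleton] at this
    have htrange : FinPath.range (⟨G.rng e0, t⟩ : FinPath G) = q.range := by
      by_cases htn : t = []
      · subst htn
        rw [range_nil]
        show G.rng e0 = q.range
        unfold FinPath.range
        rw [ht]
        rfl
      · have h1 : FinPath.range (⟨q.start, [e0] ++ t⟩ : FinPath G)
            = FinPath.range (⟨G.rng e0, t⟩ : FinPath G) :=
          range_append_right q.start (G.rng e0) [e0] t htn
        rw [← h1]
        simp only [List.singleton_append]
        rw [← ht]
    have hsrc : G.src e0 = p.range := by
      have h0 : G.src (q.edges[0]'(by rw [ht]; simp)) = q.start :=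
        src_getElem_zero hqpath (by rw [ht]; simp)
      have : q.edges[0]'(by rw [ht]; simp) = e0 := by
        simp [ht]
      rw [this] at h0
      rw [h0]
      exact hzs
    refine ⟨⟨⟨BPath.fin ⟨G.rng e0, t⟩, htpath, by rw [htrange]; exact hbd.2⟩,
      by rw [range_extend]; rfl, ?_⟩, hsrc, ?_⟩
    · rw [hy]
      show BPath.fin ⟨p.start, p.edges ++ q.edges⟩
        = BPath.fin ⟨p.start, (p.edges ++ [e0]) ++ t⟩
      rw [ht, List.append_assoc]
      rfl
    · rw [hy]
      exact Or.inr ⟨e0, List.mem_append_right _ (by rw [ht]; exact List.mem_cons_self), rfl⟩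
  | inf g =>
    have he0' : g 0 = e0 := by
      have : some (g 0) = some e0 := he0
      injection this
    subst he0'
    have hsrc : G.src (g 0) = p.range := hzs
    refine ⟨⟨⟨BPath.inf (fun m => g (m+1)), fun m => hbd (m+1)⟩,
      by rw [range_extend]; exact (hbd 0).symm, ?_⟩, hsrc, ?_⟩
    · rw [hy]
      show BPath.inf _ = BPath.inf _
      congr 1
      funext n
      show (if h : n < p.edges.length then p.edges[n] else g (n - p.edges.length))
        = (if h : n < (p.edges ++ [g 0]).length then (p.edges ++ [g 0])[n]
            else g ((n - (p.edges ++ [g 0]).length) + 1))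
      simp only [List.length_append, List.length_cons, List.length_nil]
      by_cases h1 : n < p.edges.length
      · rw [dif_pos h1, dif_pos (by omega), List.getElem_append_left h1]
      · rw [dif_neg h1]
        by_cases h2 : n < p.edges.length + 1
        · rw [dif_pos h2, List.getElem_append_right (by omega)]
          have hn : n = p.edges.length := by omega
          subst hn
          simp
        · rw [dif_neg h2]
          congr 1
          omega
    · rw [hy]
      refine Or.inr ⟨p.edges.length, ?_⟩
      show G.rng (if h : p.edges.length < p.edges.length then _
        else g (p.edges.length - p.edges.length)) = _
      rw [dif_neg (by omega)]
      simp

lemma isInvariant_UHS {H S : Set G.V} (hH : Hereditary G H) : IsInvariant (UHS H S) := by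
  intro α β hα hβ hr z hz x y hx hy hmem
  have hzβ : z.1.start = β.range := by rw [hz, hr]
  rcases hmem with hmem | hmem
  · obtain ⟨v, hvH, hon⟩ := hmem
    rw [hx] at hon
    rcases vertexOn_catB_cases hα hon with hon | hon
    · have hrH : α.range ∈ H := hered_range hH hα hvH hon
      left
      refine ⟨α.range, hrH, ?_⟩
      rw [hy]
      apply vertexOn_catB_right hβ hzβ
      have : z.1.vertexOn z.1.start := self_start_vertexOn z.1
      rwa [hz] at this
    · left
      exact ⟨v, hvH, by rw [hy]; exact vertexOn_catB_right hβ hzβ hon⟩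
  · obtain ⟨p, hxp, hpS⟩ := hmem
    rw [hx] at hxp
    cases hq : z.1 with
    | inf g =>
      rw [hq] at hxp
      exact absurd hxp (by simp [FinPath.catB])
    | fin q =>
      right
      rw [hq] at hz hzβ
      have hz' : q.start = α.range := hz
      have hzβ' : q.start = β.range := hzβ
      refine ⟨⟨β.start, β.edges ++ q.edges⟩, by rw [hy, hq]; rfl, ?_⟩
      have h1 : FinPath.range (⟨β.start, β.edges ++ q.edges⟩ : FinPath G) = q.range :=
        range_catB_fin hzβ'
      have h2 : FinPath.range (⟨α.start, α.edges ++ q.edges⟩ : FinPath G) = q.range :=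
        range_catB_fin hz'
      rw [hq] at hxp
      have hp' : p = ⟨α.start, α.edges ++ q.edges⟩ := by
        have h3 : BPath.fin p = BPath.fin ⟨α.start, α.edges ++ q.edges⟩ := hxp.symm
        injection h3
      rw [h1, ← h2, ← hp']
      exact hpS


lemma ZSet_subset_UH {H : Set G.V} {μ : FinPath G} (hμ : μ.IsPath) (hr : μ.range ∈ H) :
    ZSet μ ⊆ UH H := by
  rintro y ⟨w, hws, hyd⟩
  refine ⟨μ.range, hr, ?_⟩
  rw [hyd]
  apply vertexOn_catB_right hμ hws
  rw [← hws]
  exact self_start_vertexOn w.1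

lemma edgeAt_fin_len (p : FinPath G) : edgeAt (BPath.fin p) p.edges.length = none := by
  show p.edges[p.edges.length]? = none
  simp

lemma isOpen_UHS {H S : Set G.V} (hS : S ⊆ BreakVerts G H) : IsOpen (UHS H S) := by
  rw [isOpen_iff_forall_mem_open]
  intro x hx
  rcases hx with hx | hx
  · obtain ⟨v, hvH, hon⟩ := hx
    obtain ⟨μ, z, hμp, hμr, hzs, hxd⟩ := vertexOn_split hon
    exact ⟨ZSet μ, fun y hy => Or.inl (ZSet_subset_UH hμp (hμr ▸ hvH) hy),
      isOpen_ZSet hμp, ⟨z, by rw [hμr]; exact hzs, hxd⟩⟩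
  · obtain ⟨p, hxp, hpS⟩ := hx
    have hw := hS hpS
    have hppath : p.IsPath := by
      have h2 := x.2
      rw [hxp] at h2
      exact h2.1
    refine ⟨ZSetMinus p hw.2.2.1.toFinset, ?_,
      isOpen_basic hppath (fun e he => (hw.2.2.1.mem_toFinset.mp he).1), ?_, ?_⟩
    · -- subset
      rintro y ⟨⟨zy, hzs, hyd⟩, hnin⟩
      cases he0 : edgeAt zy.1 0 with
      | none =>
        -- zy is a trivial path; y = fin p'
        right
        obtain ⟨zy1, hzbd⟩ := zy
        cases zy1 with
        | inf g => simp [edgeAt] at he0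
        | fin q =>
          have hqnil : q.edges = [] := edgeAt_fin_nil he0
          refine ⟨⟨p.start, p.edges ++ q.edges⟩, hyd, ?_⟩
          rw [hqnil, List.append_nil]
          show p.range ∈ S
          exact hpS
      | some e0 =>
        obtain ⟨hyZ, hsrc, hon⟩ := decomp_step hppath hzs he0 hyd
        by_cases heF : e0 ∈ hw.2.2.1.toFinset
        · exact absurd (Set.mem_biUnion heF hyZ) hnin
        · left
          refine ⟨G.rng e0, ?_, hon⟩
          by_contra hrng
          exact heF (hw.2.2.1.mem_toFinset.mpr ⟨hsrc, hrng⟩)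
    · -- x ∈ ZSet p
      refine ⟨⟨BPath.fin ⟨p.range, []⟩, triv_isPath _, ?_⟩, rfl, ?_⟩
      · rw [range_nil]
        exact Or.inr hw.2.1
      · rw [hxp, catB_nil]
    · -- x not in the removed part
      intro hmem
      simp only [Set.mem_iUnion] at hmem
      obtain ⟨e, _, he⟩ := hmem
      have h1 := edgeAt_of_mem_ZSet_extend he
      rw [hxp, edgeAt_fin_len] at h1
      exact absurd h1 (by simp)

lemma avoid_range {H : Set G.V} {p : FinPath G} (h1 : p.start ∉ H)
    (h2 : ∀ e ∈ p.edges, G.rng e ∉ H) : p.range ∉ H := by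
  by_cases hn : p.edges = []
  · rw [range_of_nil_edges hn]; exact h1
  · rw [range_eq_getElem hn]
    exact h2 _ (List.getElem_mem _)

lemma not_sink_of_infEmitter {w : G.V} (h : IsInfEmitter G w) : ¬ IsSink G w := by
  intro hs
  obtain ⟨e, he⟩ := h.nonempty
  exact hs e he

lemma exists_next {H S : Set G.V} (hsat : Saturated G H) (hS : S ⊆ BreakVerts G H)
    {w : G.V} (hwH : w ∉ H)
    (hns : ¬ (IsSink G w ∨ (IsInfEmitter G w ∧ w ∉ S))) :
    ∃ e : G.Ed, G.src e = w ∧ G.rng e ∉ H := by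
  push_neg at hns
  obtain ⟨hnsnk, hinf⟩ := hns
  by_cases hie : IsInfEmitter G w
  · obtain ⟨e, he⟩ := (hS (hinf hie)).2.2.2
    exact ⟨e, he.1, he.2⟩
  · by_contra hc
    push_neg at hc
    exact hwH (hsat w ⟨hnsnk, hie⟩ (fun e he => hc e he))

def GoodT (G : DirGraph) (v : G.V) (H : Set G.V) : Type :=
  {p : FinPath G // p.IsPath ∧ p.start = v ∧ p.start ∉ H ∧ ∀ e ∈ p.edges, G.rng e ∉ H}

noncomputable def chainStep {v : G.V} {H : Set G.V}
    (next : ∀ p : GoodT G v H, {e : G.Ed // G.src e = p.1.range ∧ G.rng e ∉ H})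
    (p : GoodT G v H) : GoodT G v H :=
  ⟨p.1.extend (next p).1,
    extend_isPath p.2.1 (next p).2.1,
    p.2.2.1,
    p.2.2.2.1,
    by
      intro e he
      rcases List.mem_append.mp he with h | h
      · exact p.2.2.2.2 e h
      · simp at h; subst h; exact (next p).2.2⟩

noncomputable def chainSeq {v : G.V} {H : Set G.V} (hvH : v ∉ H)
    (next : ∀ p : GoodT G v H, {e : G.Ed // G.src e = p.1.range ∧ G.rng e ∉ H}) :
    ℕ → GoodT G v H
  | 0 => ⟨⟨v, []⟩, triv_isPath v, rfl, hvH, by simp⟩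
  | n+1 => chainStep next (chainSeq hvH next n)

lemma mem_H_of_ZSet_subset {H S : Set G.V} (hsat : Saturated G H)
    (hS : S ⊆ BreakVerts G H) {v : G.V}
    (hv : ZSet (⟨v, []⟩ : FinPath G) ⊆ UHS H S) : v ∈ H := by
  by_contra hvH
  by_cases hcase : ∃ p : FinPath G, p.IsPath ∧ p.start = v ∧
      (p.start ∉ H ∧ ∀ e ∈ p.edges, G.rng e ∉ H) ∧
      (IsSink G p.range ∨ (IsInfEmitter G p.range ∧ p.range ∉ S))
  · obtain ⟨p, hp, hst, hav, hstop⟩ := hcase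
    have hbd : (BPath.fin p).IsBoundary := ⟨hp, by
      rcases hstop with h | h
      · exact Or.inl h
      · exact Or.inr h.1⟩
    have hmem : (⟨BPath.fin p, hbd⟩ : BPS G) ∈ ZSet (⟨v, []⟩ : FinPath G) :=
      mem_ZSet_triv.mpr hst
    rcases hv hmem with hU | hU
    · obtain ⟨u, huH, hon⟩ := hU
      rcases hon with h | ⟨e, he, hev⟩
      · exact hav.1 (h ▸ huH)
      · exact hav.2 e he (hev ▸ huH)
    · obtain ⟨p', hpp', hr'⟩ := hU
      have hpe : p = p' := by
        have : BPath.fin p = BPath.fin p' := hpp'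
        injection this
      subst hpe
      rcases hstop with h | h
      · obtain ⟨e, he⟩ := (hS hr').2.1.nonempty
        exact h e he
      · exact h.2 hr'
  · -- build an infinite path avoiding H
    have hnext : ∀ p : GoodT G v H,
        {e : G.Ed // G.src e = p.1.range ∧ G.rng e ∉ H} := by
      intro p
      have hex : ∃ e : G.Ed, G.src e = p.1.range ∧ G.rng e ∉ H := by
        apply exists_next hsat hS (avoid_range p.2.2.2.1 p.2.2.2.2)
        intro hstop
        exact hcase ⟨p.1, p.2.1, p.2.2.1, ⟨p.2.2.2.1, p.2.2.2.2⟩, hstop⟩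
      exact ⟨hex.choose, hex.choose_spec⟩
    let seq : ℕ → GoodT G v H := chainSeq hvH hnext
    let f : ℕ → G.Ed := fun n => (hnext (seq n)).1
    have hseq : ∀ n, (seq (n+1)).1 = (seq n).1.extend (f n) := fun n => rfl
    have hinfp : InfIsPath G f := by
      intro n
      have h1 : G.src (f (n+1)) = (seq (n+1)).1.range := (hnext (seq (n+1))).2.1
      rw [h1, hseq n, range_extend]
    have hstart : G.src (f 0) = v := by
      have h1 : G.src (f 0) = (seq 0).1.range := (hnext (seq 0)).2.1
      rw [h1]
      show FinPath.range (⟨v, []⟩ : FinPath G) = v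
      exact range_nil v
    have hmem : (⟨BPath.inf f, hinfp⟩ : BPS G) ∈ ZSet (⟨v, []⟩ : FinPath G) :=
      mem_ZSet_triv.mpr hstart
    rcases hv hmem with hU | hU
    · obtain ⟨u, huH, hon⟩ := hU
      rcases hon with h | ⟨n, hn⟩
      · rw [hstart] at h
        exact hvH (h ▸ huH)
      · -- rng (f n) ∉ H
        have : G.rng (f n) ∉ H := (hnext (seq n)).2.2
        exact this (hn ▸ huH)
    · obtain ⟨p', hpp', _⟩ := hU
      simp at hpp'


lemma mem_of_cat_mem {U : Set (BPS G)} (hUi : IsInvariant U) {ν : FinPath G} (hν : ν.IsPath)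
    {y₀ : BPS G} (hs : y₀.1.start = ν.range) {Y : BPS G} (hY : Y.1 = ν.catB y₀.1)
    (hYU : Y ∈ U) : y₀ ∈ U :=
  hUi ν ⟨ν.range, []⟩ hν (triv_isPath _) (range_nil _).symm y₀ hs Y y₀ hY
    (triv_catB _ _ hs).symm hYU

lemma cat_mem_of_mem {U : Set (BPS G)} (hUi : IsInvariant U) {ν : FinPath G} (hν : ν.IsPath)
    {y₀ : BPS G} (hs : y₀.1.start = ν.range) {Y : BPS G} (hY : Y.1 = ν.catB y₀.1)
    (hy₀U : y₀ ∈ U) : Y ∈ U :=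
  hUi ⟨ν.range, []⟩ ν (triv_isPath _) hν (range_nil _) y₀
    (by rw [hs]; exact (range_nil _).symm) y₀ Y (triv_catB _ _ hs).symm hY hy₀U

lemma self_mem_ZSet {x : BPS G} {p : FinPath G} (hxp : x.1 = BPath.fin p) : x ∈ ZSet p := by
  have hbd := x.2
  rw [hxp] at hbd
  exact ⟨⟨BPath.fin ⟨p.range, []⟩, triv_isPath _, by rw [range_nil]; exact hbd.2⟩, rfl,
    by rw [hxp, catB_nil]⟩

lemma mem_HOf_iff {U : Set (BPS G)} {v : G.V} :
    v ∈ HOf U ↔ ∀ x : BPS G, x.1.start = v → x ∈ U := by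
  constructor
  · intro h x hx
    exact h (mem_ZSet_triv.mpr hx)
  · intro h y hy
    exact h y (mem_ZSet_triv.mp hy)

lemma ZSet_prefix_subset {μ : FinPath G} (hμ : μ.IsPath) {l : List G.Ed}
    (hμ2 : FinPath.IsPath (⟨μ.start, μ.edges ++ l⟩ : FinPath G)) :
    ZSet (⟨μ.start, μ.edges ++ l⟩ : FinPath G) ⊆ ZSet μ := by
  rintro y ⟨z, hzs, hyd⟩
  have hlp : FinPath.IsPath (⟨μ.range, l⟩ : FinPath G) := suffix_isPath hμ2
  have hzr : z.1.start = FinPath.range (⟨μ.range, l⟩ : FinPath G) := by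
    rw [hzs]
    by_cases hl : l = []
    · subst hl
      show FinPath.range (⟨μ.start, μ.edges ++ ([] : List G.Ed)⟩ : FinPath G) = _
      rw [List.append_nil, range_nil]
    · exact range_append_right μ.start μ.range μ.edges l hl
  refine ⟨⟨(⟨μ.range, l⟩ : FinPath G).catB z.1, catB_isBoundary hlp z.2 hzr⟩, ?_, ?_⟩
  · exact catB_start hlp hzr
  · rw [hyd]
    exact catB_assoc μ.start μ.range μ.edges l z.1

lemma prefix_of_mem_two {μ₁ μ₂ : FinPath G} (h1 : μ₁.IsPath) (h2 : μ₂.IsPath)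
    {x : BPS G} (hx1 : x ∈ ZSet μ₁) (hx2 : x ∈ ZSet μ₂)
    (hlen : μ₁.edges.length ≤ μ₂.edges.length) :
    μ₂.start = μ₁.start ∧ μ₂.edges = μ₁.edges ++ μ₂.edges.drop μ₁.edges.length := by
  constructor
  · obtain ⟨z1, hza, hxa⟩ := hx1
    obtain ⟨z2, hzb, hxb⟩ := hx2
    have e1 : x.1.start = μ₁.start := by rw [hxa]; exact catB_start h1 hza
    have e2 : x.1.start = μ₂.start := by rw [hxb]; exact catB_start h2 hzb
    exact e2.symm.trans e1
  · apply List.ext_getElem (by simp; omega)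
    intro i hi hi2
    by_cases hil : i < μ₁.edges.length
    · have a1 := edgeAt_of_mem_ZSet hx1 hil
      have a2 := edgeAt_of_mem_ZSet hx2 hi
      rw [a1] at a2
      rw [List.getElem_append_left hil]
      injection a2 with h
      exact h.symm
    · rw [List.getElem_append_right (by omega), List.getElem_drop]
      congr 1
      omega

lemma ZSetMinus_anti_F {μ : FinPath G} {F F' : Finset G.Ed} (h : F ⊆ F') :
    ZSetMinus μ F' ⊆ ZSetMinus μ F := by
  rintro y ⟨h1, h2⟩
  refine ⟨h1, fun hc => h2 ?_⟩
  simp only [Set.mem_iUnion] at hc ⊢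
  obtain ⟨e, heF, hy⟩ := hc
  exact ⟨e, h heF, hy⟩

lemma inter_basic {μ₁ μ₂ : FinPath G} {F₁ F₂ : Finset G.Ed}
    (hμ₁ : μ₁.IsPath) (hμ₂ : μ₂.IsPath)
    (hF₁ : ∀ e ∈ F₁, G.src e = μ₁.range) (hF₂ : ∀ e ∈ F₂, G.src e = μ₂.range)
    {x : BPS G} (hx₁ : x ∈ ZSetMinus μ₁ F₁) (hx₂ : x ∈ ZSetMinus μ₂ F₂)
    (hlen : μ₁.edges.length ≤ μ₂.edges.length) :
    ∃ (μ : FinPath G) (F : Finset G.Ed), μ.IsPath ∧ (∀ e ∈ F, G.src e = μ.range) ∧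
      x ∈ ZSetMinus μ F ∧ ZSetMinus μ F ⊆ ZSetMinus μ₁ F₁ ∧
        ZSetMinus μ F ⊆ ZSetMinus μ₂ F₂ := by
  classical
  obtain ⟨hst, hed⟩ := prefix_of_mem_two hμ₁ hμ₂ hx₁.1 hx₂.1 hlen
  obtain ⟨l, hl⟩ : ∃ l, μ₂ = ⟨μ₁.start, μ₁.edges ++ l⟩ := by
    refine ⟨μ₂.edges.drop μ₁.edges.length, ?_⟩
    rw [← hst, ← hed]
  subst hl
  cases l with
  | nil =>
    have hμ₂eq : (⟨μ₁.start, μ₁.edges ++ ([] : List G.Ed)⟩ : FinPath G) = μ₁ := by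
      rw [List.append_nil]
    rw [hμ₂eq] at hx₂ hF₂
    refine ⟨μ₁, F₁ ∪ F₂, hμ₁, ?_, ⟨hx₁.1, ?_⟩, ZSetMinus_anti_F Finset.subset_union_left,
      ?_⟩
    · intro e he
      rcases Finset.mem_union.mp he with h | h
      · exact hF₁ e h
      · exact hF₂ e h
    · intro hc
      simp only [Set.mem_iUnion] at hc
      obtain ⟨e, heF, hy⟩ := hc
      rcases Finset.mem_union.mp heF with h | h
      · exact hx₁.2 (Set.mem_biUnion h hy)
      · exact hx₂.2 (Set.mem_biUnion h hy)
    · rw [hμ₂eq]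
      exact ZSetMinus_anti_F Finset.subset_union_right
  | cons e'' t =>
    have hshape : (⟨μ₁.start, μ₁.edges ++ (e'' :: t)⟩ : FinPath G)
        = ⟨(μ₁.extend e'').start, (μ₁.extend e'').edges ++ t⟩ := by
      show (⟨μ₁.start, μ₁.edges ++ (e'' :: t)⟩ : FinPath G)
        = ⟨μ₁.start, (μ₁.edges ++ [e'']) ++ t⟩
      simp
    have hextp : (μ₁.extend e'').IsPath := by
      have h2 := hμ₂
      rw [hshape] at h2
      exact prefix_isPath h2
    have hxext : x ∈ ZSet (μ₁.extend e'') := by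
      have hx2Z := hx₂.1
      rw [hshape] at hx2Z
      have h2 := hμ₂
      rw [hshape] at h2
      exact ZSet_prefix_subset hextp h2 hx2Z
    refine ⟨⟨μ₁.start, μ₁.edges ++ (e'' :: t)⟩, F₂, hμ₂, hF₂, hx₂, ?_, subset_rfl⟩
    rintro y ⟨hyZ, _⟩
    constructor
    · exact ZSet_prefix_subset hμ₁ hμ₂ hyZ
    · intro hc
      simp only [Set.mem_iUnion] at hc
      obtain ⟨e', he'F, hy'⟩ := hc
      have ha1 : edgeAt y.1 μ₁.edges.length = some e'' := by
        have := edgeAt_of_mem_ZSet hyZ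
          (show μ₁.edges.length < (μ₁.edges ++ (e'' :: t)).length by simp)
        rw [this]
        congr 1
        rw [List.getElem_append_right (le_refl _)]
        simp
      have ha2 : edgeAt y.1 μ₁.edges.length = some e' := edgeAt_of_mem_ZSet_extend hy'
      have hee : e' = e'' := by
        rw [ha1] at ha2
        injection ha2.symm
      subst hee
      exact hx₁.2 (Set.mem_biUnion he'F hxext)

lemma exists_basic_nbhd {U : Set (BPS G)} (hU : IsOpen U) {x : BPS G} (hx : x ∈ U) :
    ∃ (μ : FinPath G) (F : Finset G.Ed), μ.IsPath ∧ (∀ e ∈ F, G.src e = μ.range) ∧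
      x ∈ ZSetMinus μ F ∧ ZSetMinus μ F ⊆ U := by
  have hU' : TopologicalSpace.GenerateOpen
      { W | ∃ (μ : FinPath G) (F : Finset G.Ed),
        μ.IsPath ∧ (∀ e ∈ F, G.src e = μ.range) ∧ W = ZSetMinus μ F } U := hU
  clear hU
  induction hU' with
  | basic W hW =>
    obtain ⟨μ, F, hμ, hF, rfl⟩ := hW
    exact ⟨μ, F, hμ, hF, hx, subset_rfl⟩
  | univ =>
    refine ⟨⟨x.1.start, []⟩, ∅, triv_isPath _, by simp, ⟨?_, ?_⟩, by simp⟩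
    · exact mem_ZSet_triv.mpr rfl
    · simp
  | inter s t hs ht ihs iht =>
    obtain ⟨μ₁, F₁, hμ₁, hF₁, hx₁, hsub₁⟩ := ihs hx.1
    obtain ⟨μ₂, F₂, hμ₂, hF₂, hx₂, hsub₂⟩ := iht hx.2
    rcases le_total μ₁.edges.length μ₂.edges.length with hle | hle
    · obtain ⟨μ, F, h1, h2, h3, h4, h5⟩ := inter_basic hμ₁ hμ₂ hF₁ hF₂ hx₁ hx₂ hle
      exact ⟨μ, F, h1, h2, h3, fun y hy => ⟨hsub₁ (h4 hy), hsub₂ (h5 hy)⟩⟩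
    · obtain ⟨μ, F, h1, h2, h3, h4, h5⟩ := inter_basic hμ₂ hμ₁ hF₂ hF₁ hx₂ hx₁ hle
      exact ⟨μ, F, h1, h2, h3, fun y hy => ⟨hsub₁ (h5 hy), hsub₂ (h4 hy)⟩⟩
  | sUnion S hS ih =>
    obtain ⟨s, hsS, hxs⟩ := hx
    obtain ⟨μ, F, h1, h2, h3, h4⟩ := ih s hsS hxs
    exact ⟨μ, F, h1, h2, h3, fun y hy => ⟨s, hsS, h4 hy⟩⟩


lemma hered_HOf {U : Set (BPS G)} (hUi : IsInvariant U) : Hereditary G (HOf U) := by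
  intro e he
  rw [mem_HOf_iff] at he ⊢
  intro x hx
  have hα : FinPath.IsPath (⟨G.src e, [e]⟩ : FinPath G) := by
    constructor
    · intro d hd
      have hde : e = d := by simpa using hd
      subst hde; rfl
    · exact List.isChain_singleton _
  have hxr : x.1.start = FinPath.range (⟨G.src e, [e]⟩ : FinPath G) := by
    rw [range_singleton]; exact hx
  have hybd := catB_isBoundary hα x.2 hxr
  have hyU : (⟨(⟨G.src e, [e]⟩ : FinPath G).catB x.1, hybd⟩ : BPS G) ∈ U :=
    he _ (catB_start hα hxr)
  exact mem_of_cat_mem hUi hα hxr rfl hyU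

lemma eq_triv_of_edgeAt_none {y₀ : BPS G} (h : edgeAt y₀.1 0 = none) :
    y₀.1 = BPath.fin ⟨y₀.1.start, []⟩ := by
  obtain ⟨y1, hbd⟩ := y₀
  cases y1 with
  | inf f => simp [edgeAt] at h
  | fin q =>
    have hqnil : q.edges = [] := edgeAt_fin_nil h
    show BPath.fin q = BPath.fin ⟨q.start, []⟩
    rw [← hqnil]

lemma triv_tail_mem {U : Set (BPS G)} (hUi : IsInvariant U) {x : BPS G} {p : FinPath G}
    (hxp : x.1 = BPath.fin p) (hxU : x ∈ U) {y₀ : BPS G}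
    (hy₀ : y₀.1 = BPath.fin ⟨p.range, []⟩) : y₀ ∈ U := by
  have hppath : p.IsPath := by have h2 := x.2; rw [hxp] at h2; exact h2.1
  exact mem_of_cat_mem hUi hppath (by rw [hy₀]; rfl)
    (by rw [hxp, hy₀, catB_nil]) hxU

lemma mem_of_start_edge_HOf {U : Set (BPS G)} (hUi : IsInvariant U) {y₀ : BPS G} {e0 : G.Ed}
    (he0 : edgeAt y₀.1 0 = some e0) (hrng : G.rng e0 ∈ HOf U) : y₀ ∈ U := by
  have hzs : y₀.1.start = FinPath.range (⟨y₀.1.start, []⟩ : FinPath G) := (range_nil _).symm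
  have hxd : y₀.1 = (⟨y₀.1.start, []⟩ : FinPath G).catB y₀.1 := (triv_catB _ _ rfl).symm
  obtain ⟨hZ, hsrc, _⟩ := decomp_step (triv_isPath _) hzs he0 hxd
  obtain ⟨z₀, hz₀s, hyd⟩ := hZ
  have hz₀U : z₀ ∈ U := mem_HOf_iff.mp hrng z₀ (by rw [hz₀s, range_extend])
  exact cat_mem_of_mem hUi (extend_isPath (triv_isPath _) hsrc) hz₀s hyd hz₀U

lemma sat_HOf {U : Set (BPS G)} (hUi : IsInvariant U) : Saturated G (HOf U) := by
  intro v hreg hall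
  rw [mem_HOf_iff]
  intro x hx
  cases he0 : edgeAt x.1 0 with
  | none =>
    exfalso
    have hxt := eq_triv_of_edgeAt_none he0
    have hbd := x.2
    rw [hxt] at hbd
    have h2 := hbd.2
    rw [range_nil, hx] at h2
    rcases h2 with h | h
    · exact hreg.1 h
    · exact hreg.2 h
  | some e0 =>
    have hzs : x.1.start = FinPath.range (⟨v, []⟩ : FinPath G) := hx
    have hxd : x.1 = (⟨v, []⟩ : FinPath G).catB x.1 := (triv_catB v x.1 hx).symm
    obtain ⟨hxZ, hsrc, _⟩ := decomp_step (triv_isPath v) hzs he0 hxd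
    have hrng : G.rng e0 ∈ HOf U := hall e0 (by rw [hsrc]; exact range_nil v)
    exact mem_of_start_edge_HOf hUi he0 hrng

/-- Key absorption: if `Z(μ∖F) ⊆ U`, `ν = ⟨μ.start, μ.edges ++ d :: rest⟩` is a path with
`d ∉ F`, then the range of `ν` lies in `H_U`. -/
lemma rng_last_mem_HOf {U : Set (BPS G)} (hUi : IsInvariant U)
    {μ : FinPath G} {F : Finset G.Ed} (hμ : μ.IsPath) (hsub : ZSetMinus μ F ⊆ U)
    {d : G.Ed} {rest : List G.Ed}
    (hν : FinPath.IsPath (⟨μ.start, μ.edges ++ (d :: rest)⟩ : FinPath G))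
    (hdF : d ∉ F) :
    FinPath.range (⟨μ.start, μ.edges ++ (d :: rest)⟩ : FinPath G) ∈ HOf U := by
  rw [mem_HOf_iff]
  intro y₀ hy₀
  have hbd := catB_isBoundary hν y₀.2 hy₀
  set y : BPS G := ⟨FinPath.catB ⟨μ.start, μ.edges ++ (d :: rest)⟩ y₀.1, hbd⟩ with hy
  have hyZν : y ∈ ZSet (⟨μ.start, μ.edges ++ (d :: rest)⟩ : FinPath G) := ⟨y₀, hy₀, rfl⟩
  have hyU : y ∈ U := by
    apply hsub
    constructor
    · exact ZSet_prefix_subset hμ hν hyZν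
    · intro hc
      simp only [Set.mem_iUnion] at hc
      obtain ⟨e', he'F, hy'⟩ := hc
      have ha1 : edgeAt y.1 μ.edges.length = some d := by
        have h3 := edgeAt_of_mem_ZSet hyZν
          (show μ.edges.length < (μ.edges ++ (d :: rest)).length by simp)
        rw [h3]
        congr 1
        rw [List.getElem_append_right (le_refl _)]
        simp
      have ha2 : edgeAt y.1 μ.edges.length = some e' := edgeAt_of_mem_ZSet_extend hy'
      rw [ha1] at ha2
      have : d = e' := by injection ha2
      subst this
      exact hdF he'F
  exact mem_of_cat_mem hUi hν hy₀ rfl hyU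

lemma SOf_subset_break {U : Set (BPS G)} (hUo : IsOpen U) (hUi : IsInvariant U) :
    SOf U ⊆ BreakVerts G (HOf U) := by
  rintro w ⟨x, hxU, p, hxp, hpr, hinfE, hwH⟩
  subst hpr
  refine ⟨hwH, hinfE, ?_, ?_⟩
  · -- finiteness
    obtain ⟨μ, F, hμ, hF, ⟨hxZ, hxN⟩, hsub⟩ := exists_basic_nbhd hUo hxU
    obtain ⟨z, hzs, hxd⟩ := hxZ
    obtain ⟨z1, hzbd⟩ := z
    cases z1 with
    | inf g =>
      exfalso
      rw [hxp] at hxd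
      exact absurd hxd.symm (by simp [FinPath.catB])
    | fin q =>
      have hpq : p = ⟨μ.start, μ.edges ++ q.edges⟩ := by
        rw [hxp] at hxd
        have h3 : BPath.fin p = BPath.fin ⟨μ.start, μ.edges ++ q.edges⟩ := hxd
        injection h3
      cases hqe : q.edges with
      | cons e'' t =>
        -- w ∈ HOf U : contradiction with hwH
        exfalso
        apply hwH
        rw [mem_HOf_iff]
        intro y₀ hy₀
        cases he0 : edgeAt y₀.1 0 with
        | none =>
          apply triv_tail_mem hUi hxp hxU
          have := eq_triv_of_edgeAt_none he0
          rw [this, hy₀]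
        | some e0 =>
          apply mem_of_start_edge_HOf hUi he0
          -- rng e0 ∈ HOf U via the absorption lemma with d := e'', rest := t ++ [e0]
          have hsrc0 : G.src e0 = p.range := by
            have hzs0 : y₀.1.start = FinPath.range (⟨p.range, []⟩ : FinPath G) := by
              rw [hy₀]; exact (range_nil _).symm
            have hxd0 : y₀.1 = (⟨p.range, []⟩ : FinPath G).catB y₀.1 :=
              (triv_catB _ _ hy₀).symm
            obtain ⟨_, hsrc, _⟩ := decomp_step (triv_isPath _) hzs0 he0 hxd0
            rw [hsrc]; exact range_nil _
          have hppath : p.IsPath := by have h2 := x.2; rw [hxp] at h2; exact h2.1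
          have hextp : (p.extend e0).IsPath := extend_isPath hppath hsrc0
          have hshape : p.extend e0
              = (⟨μ.start, μ.edges ++ (e'' :: (t ++ [e0]))⟩ : FinPath G) := by
            show (⟨p.start, p.edges ++ [e0]⟩ : FinPath G) = _
            rw [hpq, hqe]
            simp
          have hν : FinPath.IsPath (⟨μ.start, μ.edges ++ (e'' :: (t ++ [e0]))⟩ : FinPath G) := by
            rw [← hshape]; exact hextp
          have hdF : e'' ∉ F := by
            intro hcF
            -- x ∈ Z(μ.extend e'')
            have hxz : x ∈ ZSet (μ.extend e'') := by
              have hxZp : x ∈ ZSet p := self_mem_ZSet hxp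
              have hsh2 : p = ⟨(μ.extend e'').start, (μ.extend e'').edges ++ t⟩ := by
                rw [hpq, hqe]
                show (⟨μ.start, μ.edges ++ (e'' :: t)⟩ : FinPath G)
                  = ⟨μ.start, (μ.edges ++ [e'']) ++ t⟩
                simp
              have hextp'' : (μ.extend e'').IsPath := by
                have h4 : p.IsPath := by have h2 := x.2; rw [hxp] at h2; exact h2.1
                rw [hsh2] at h4
                exact prefix_isPath h4
              have h4 : p.IsPath := by have h2 := x.2; rw [hxp] at h2; exact h2.1
              rw [hsh2] at hxZp h4
              exact ZSet_prefix_subset hextp'' h4 hxZp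
            exact hxN (Set.mem_biUnion hcF hxz)
          have hres := rng_last_mem_HOf hUi hμ hsub hν hdF
          have hrng : FinPath.range (⟨μ.start, μ.edges ++ (e'' :: (t ++ [e0]))⟩ : FinPath G)
              = G.rng e0 := by
            rw [← hshape]
            exact range_extend p e0
          rwa [hrng] at hres
      | nil =>
        -- p = μ (up to append nil); the breaking set is contained in F
        have hpμ : p = μ := by rw [hpq, hqe, List.append_nil]
        subst hpμ
        apply Set.Finite.subset F.finite_toSet
        intro e ⟨hesrc, hern⟩
        by_contra heF
        apply hern
        have hν : FinPath.IsPath (⟨p.start, p.edges ++ (e :: [])⟩ : FinPath G) :=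
          extend_isPath hμ hesrc
        have hres := rng_last_mem_HOf hUi hμ hsub hν heF
        have hrng : FinPath.range (⟨p.start, p.edges ++ (e :: [])⟩ : FinPath G)
            = G.rng e := range_concat _ _ _
        rwa [hrng] at hres
  · -- nonemptiness
    have hw' := hwH
    rw [mem_HOf_iff] at hw'
    push_neg at hw'
    obtain ⟨y₀, hy₀s, hy₀U⟩ := hw'
    cases he0 : edgeAt y₀.1 0 with
    | none =>
      exfalso
      apply hy₀U
      apply triv_tail_mem hUi hxp hxU
      have := eq_triv_of_edgeAt_none he0
      rw [this, hy₀s]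
    | some e0 =>
      have hzs0 : y₀.1.start = FinPath.range (⟨p.range, []⟩ : FinPath G) := by
        rw [hy₀s]; exact (range_nil _).symm
      have hxd0 : y₀.1 = (⟨p.range, []⟩ : FinPath G).catB y₀.1 :=
        (triv_catB _ _ hy₀s).symm
      obtain ⟨_, hsrc, _⟩ := decomp_step (triv_isPath _) hzs0 he0 hxd0
      refine ⟨e0, by rw [hsrc]; exact range_nil _, ?_⟩
      intro hrng
      exact hy₀U (mem_of_start_edge_HOf hUi he0 hrng)

lemma UHS_HOf_SOf {U : Set (BPS G)} (hUo : IsOpen U) (hUi : IsInvariant U) :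
    UHS (HOf U) (SOf U) = U := by
  ext x
  constructor
  · rintro (⟨v, hv, hon⟩ | ⟨p, hxp, hw⟩)
    · obtain ⟨μ, z, hμp, hμr, hzs, hxd⟩ := vertexOn_split hon
      have hzU : z ∈ U := mem_HOf_iff.mp hv z hzs
      exact cat_mem_of_mem hUi hμp (by rw [hμr]; exact hzs) hxd hzU
    · obtain ⟨x', hx'U, p', hx'p, hp'r, hinfE, hwn⟩ := hw
      have hppath : p.IsPath := by have h2 := x.2; rw [hxp] at h2; exact h2.1
      have hp'path : p'.IsPath := by have h2 := x'.2; rw [hx'p] at h2; exact h2.1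
      have hzbd : (BPath.fin ⟨p.range, []⟩ : BPath G).IsBoundary :=
        ⟨triv_isPath _, Or.inr (by rw [range_nil]; exact hinfE)⟩
      exact hUi p' p hp'path hppath hp'r ⟨BPath.fin ⟨p.range, []⟩, hzbd⟩ hp'r.symm x' x
        (by rw [hx'p, catB_nil]) (by rw [hxp, catB_nil]) hx'U
  · intro hxU
    by_cases hUH : x ∈ UH (HOf U)
    · exact Or.inl hUH
    · right
      obtain ⟨μ, F, hμ, hF, ⟨hxZ, hxN⟩, hsub⟩ := exists_basic_nbhd hUo hxU
      obtain ⟨z, hzs, hxd⟩ := hxZ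
      cases hx1 : x.1 with
      | inf f =>
        exfalso
        obtain ⟨z1, hzbd⟩ := z
        cases z1 with
        | fin q =>
          rw [hx1] at hxd
          exact absurd hxd (by simp [FinPath.catB])
        | inf g =>
          -- e'' := g 0
          obtain ⟨hxZe, hsrc, hon⟩ := decomp_step hμ hzs (rfl : edgeAt (BPath.inf g) 0 = some (g 0)) hxd
          have hdF : g 0 ∉ F := fun hc => hxN (Set.mem_biUnion hc hxZe)
          have hν : FinPath.IsPath (⟨μ.start, μ.edges ++ (g 0 :: [])⟩ : FinPath G) :=
            extend_isPath hμ hsrc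
          have hres := rng_last_mem_HOf hUi hμ hsub hν hdF
          have hrng : FinPath.range (⟨μ.start, μ.edges ++ (g 0 :: [])⟩ : FinPath G)
              = G.rng (g 0) := range_concat _ _ _
          rw [hrng] at hres
          exact hUH ⟨G.rng (g 0), hres, hon⟩
      | fin p =>
        have hbd := x.2
        rw [hx1] at hbd
        have hwnH : p.range ∉ HOf U := by
          intro hmem
          exact hUH ⟨p.range, hmem, by rw [hx1]; exact range_vertexOn_fin p⟩
        rcases hbd.2 with hsink | hinf
        · exfalso
          apply hwnH
          rw [mem_HOf_iff]
          intro y₀ hy₀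
          cases he0 : edgeAt y₀.1 0 with
          | none =>
            apply triv_tail_mem hUi hx1 hxU
            have := eq_triv_of_edgeAt_none he0
            rw [this, hy₀]
          | some e0 =>
            exfalso
            have hzs0 : y₀.1.start = FinPath.range (⟨p.range, []⟩ : FinPath G) := by
              rw [hy₀]; exact (range_nil _).symm
            have hxd0 : y₀.1 = (⟨p.range, []⟩ : FinPath G).catB y₀.1 :=
              (triv_catB _ _ hy₀).symm
            obtain ⟨_, hsrc, _⟩ := decomp_step (triv_isPath _) hzs0 he0 hxd0
            exact hsink e0 (by rw [hsrc]; exact range_nil _)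
        · exact ⟨p, hx1, x, hxU, p, hx1, rfl, hinf, hwnH⟩


lemma HOf_UHS {H S : Set G.V} (hsat : Saturated G H) (hS : S ⊆ BreakVerts G H) :
    HOf (UHS H S) = H := by
  ext v
  constructor
  · exact fun h => mem_H_of_ZSet_subset hsat hS h
  · intro hv y hy
    exact Or.inl (ZSet_subset_UH (triv_isPath v) (by rw [range_nil]; exact hv) hy)

lemma SOf_UHS {H S : Set G.V} (hH : Hereditary G H) (hsat : Saturated G H)
    (hS : S ⊆ BreakVerts G H) : SOf (UHS H S) = S := by
  ext w
  constructor
  · rintro ⟨x, hxU, p, hxp, hpr, hinfE, hwH⟩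
    rw [HOf_UHS hsat hS] at hwH
    rcases hxU with hU | hU
    · obtain ⟨u, huH, hon⟩ := hU
      rw [hxp] at hon
      have hpath : p.IsPath := by have h2 := x.2; rw [hxp] at h2; exact h2.1
      have hrH : p.range ∈ H := hered_range hH hpath huH hon
      rw [hpr] at hrH
      exact absurd hrH hwH
    · obtain ⟨p', hpp', hr'⟩ := hU
      rw [hxp] at hpp'
      have hpe : p = p' := by injection hpp'
      rw [← hpr, hpe]
      exact hr'
  · intro hwS
    have hw := hS hwS
    refine ⟨⟨BPath.fin ⟨w, []⟩, triv_isPath w, Or.inr (by rw [range_nil]; exact hw.2.1)⟩,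
      Or.inr ⟨⟨w, []⟩, rfl, by rw [range_nil]; exact hwS⟩, ⟨w, []⟩, rfl, range_nil w,
      hw.2.1, ?_⟩
    rw [HOf_UHS hsat hS]
    exact hw.1

lemma UHS_mono {H₁ S₁ H₂ S₂ : Set G.V} (hH : H₁ ⊆ H₂) (hs : S₁ ⊆ S₂ ∪ H₂) :
    UHS H₁ S₁ ⊆ UHS H₂ S₂ := by
  rintro x (⟨v, hv, hon⟩ | ⟨p, hxp, hr⟩)
  · exact Or.inl ⟨v, hH hv, hon⟩
  · rcases hs hr with h | h
    · exact Or.inr ⟨p, hxp, h⟩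
    · exact Or.inl ⟨p.range, h, by rw [hxp]; exact range_vertexOn_fin p⟩

lemma le_of_UHS_subset {H₁ S₁ H₂ S₂ : Set G.V}
    (hsat₂ : Saturated G H₂) (hS₁ : S₁ ⊆ BreakVerts G H₁) (hS₂ : S₂ ⊆ BreakVerts G H₂)
    (hsub : UHS H₁ S₁ ⊆ UHS H₂ S₂) : H₁ ⊆ H₂ ∧ S₁ ⊆ S₂ ∪ H₂ := by
  constructor
  · intro v hv
    apply mem_H_of_ZSet_subset hsat₂ hS₂
    intro y hy
    exact hsub (Or.inl (ZSet_subset_UH (triv_isPath v) (by rw [range_nil]; exact hv) hy))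
  · intro w hw
    have hbv := hS₁ hw
    have hx : (⟨BPath.fin ⟨w, []⟩, triv_isPath w,
        Or.inr (by rw [range_nil]; exact hbv.2.1)⟩ : BPS G) ∈ UHS H₁ S₁ :=
      Or.inr ⟨⟨w, []⟩, rfl, by rw [range_nil]; exact hw⟩
    rcases hsub hx with hU | hU
    · obtain ⟨u, huH, hon⟩ := hU
      rcases hon with h | ⟨e, he, _⟩
      · right
        exact (show w = u from h) ▸ huH
      · simp at he
    · obtain ⟨p', hpp', hr'⟩ := hU
      have hpe : (⟨w, []⟩ : FinPath G) = p' := by injection hpp'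
      left
      rw [← hpe] at hr'
      rw [show FinPath.range (⟨w, []⟩ : FinPath G) = w from range_nil w] at hr'
      exact hr'

end GraphLPA

namespace GraphLPA

/-- The lattice `𝒯_E` of admissible pairs `(H, S)` with `H` hereditary and saturated
and `S ⊆ B_H`. -/
structure AdmPair (G : DirGraph) where
  H : Set G.V
  S : Set G.V
  hered : Hereditary G H
  sat : Saturated G H
  sub : S ⊆ BreakVerts G H

/-- The order on `𝒯_E`: `(H₁,S₁) ≤ (H₂,S₂)` iff `H₁ ⊆ H₂` and `S₁ ⊆ S₂ ∪ H₂`. -/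
instance (G : DirGraph) : LE (AdmPair G) :=
  ⟨fun p q => p.H ⊆ q.H ∧ p.S ⊆ q.S ∪ q.H⟩

/-- The poset `𝒪_E` of open invariant subsets of the boundary path space. -/
def OpenInv (G : DirGraph) : Type := { U : Set (BPS G) // IsOpen U ∧ IsInvariant U }

instance (G : DirGraph) : LE (OpenInv G) := ⟨fun U V => U.1 ⊆ V.1⟩

lemma AdmPair.ext' {G : DirGraph} {p q : AdmPair G} (h1 : p.H = q.H) (h2 : p.S = q.S) :
    p = q := by
  cases p
  cases q
  simp only at h1 h2
  subst h1
  subst h2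
  rfl

/-- `(H,S) ↦ U_{H,S}` is an order isomorphism from `𝒯_E` onto `𝒪_E`,
with inverse `U ↦ (H_U, S_U)`. -/
theorem statement_8 (G : DirGraph) :
    ∃ φ : AdmPair G ≃o OpenInv G,
      (∀ p : AdmPair G, (φ p).1 = UHS p.H p.S) ∧
      (∀ U : OpenInv G, (φ.symm U).H = HOf U.1 ∧ (φ.symm U).S = SOf U.1) := by
  classical
  let toFun : AdmPair G → OpenInv G := fun p =>
    ⟨UHS p.H p.S, isOpen_UHS p.sub, isInvariant_UHS p.hered⟩
  let invFun : OpenInv G → AdmPair G := fun U =>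
    ⟨HOf U.1, SOf U.1, hered_HOf U.2.2, sat_HOf U.2.2, SOf_subset_break U.2.1 U.2.2⟩
  have hleft : ∀ p, invFun (toFun p) = p := by
    intro p
    exact AdmPair.ext' (HOf_UHS p.sat p.sub) (SOf_UHS p.hered p.sat p.sub)
  have hright : ∀ U, toFun (invFun U) = U := by
    intro U
    exact Subtype.ext (UHS_HOf_SOf U.2.1 U.2.2)
  refine ⟨⟨⟨toFun, invFun, hleft, hright⟩, ?_⟩, fun p => rfl, fun U => ⟨rfl, rfl⟩⟩
  intro a b
  exact ⟨fun h => le_of_UHS_subset b.sat a.sub b.sub h, fun h => UHS_mono h.1 h.2⟩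

end GraphLPA
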